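/- arXiv:1808.01428 — 4 statements merged into one kernel-verified Lean document; each statement's English description precedes it below -/
import Mathlib

section
/- Let G be a group, let S ⊆ G be inverse-closed with 1 ∉ S, and let Γ = Cay(G,S) have girth strictly greater than 4. Suppose a ∈ S has finite order m with m > 2. Then the girth of Γ is at most m, and moreover aⁱ ∉ S for every integer i with 1 < i < m−1; consequently, for every b ∈ G the right coset ⟨a⟩b induces an m-cycle in Γ, so the vertices of Γ are partitioned into induced m-cycles. -/
/-- The Cayley graph of a group `G` with connection set `S`. When `S` is inverse-closed
and does not contain `1`, distinct `a b` are adjacent iff `a * b⁻¹ ∈ S`. -/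
def cayleyGraph {G : Type*} [Group G] (S : Set G) : SimpleGraph G where
  Adj a b := a ≠ b ∧ a * b⁻¹ ∈ S ∧ b * a⁻¹ ∈ S
  symm := ⟨fun a b h => ⟨h.1.symm, h.2.2, h.2.1⟩⟩
  loopless := ⟨fun a h => h.1 rfl⟩

/-!
If `t ∈ S` commutes with `s ∈ S` and `t ∉ {s, s⁻¹}`, then `1, s, t * s, t` is a 4-cycle of
`Cay(G, S)`. So girth `> 4` forces the only powers of `a` in `S` to be `a` and `a⁻¹`. On a coset
`⟨a⟩b` the vertices `a ^ j * b` and `a ^ k * b` are then adjacent exactly when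
`a ^ (j - k) = a ^ (±1)`, i.e. when `j - k = ±1` modulo `m`: the coset induces `C_m`, and in
particular the girth is at most `m`.
-/

open SimpleGraph

lemma SimpleGraph.egirth_le_of_cycleGraph_isContained {V : Type*} {Γ : SimpleGraph V} {n : ℕ}
    (hn : 2 < n) (h : cycleGraph n ⊑ Γ) : Γ.egirth ≤ n := by
  obtain ⟨v, p, hp, hlen⟩ := (cycleGraph_isContained_iff hn).mp h
  exact hlen ▸ egirth_le_length hp

section OrderOf

variable {G : Type*} [Group G] {a : G} {m : ℕ}

lemma pow_finVal_add (hm : orderOf a = m) (j k : Fin m) :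
    a ^ (j + k).val = a ^ j.val * a ^ k.val := by
  subst hm
  rw [Fin.val_add, pow_mod_orderOf, pow_add]

lemma pow_finVal_sub (hm : orderOf a = m) (j k : Fin m) :
    a ^ (j - k).val = a ^ j.val * (a ^ k.val)⁻¹ := by
  rcases m with _ | m
  · exact j.elim0
  · rw [eq_mul_inv_iff_mul_eq, ← pow_finVal_add hm, sub_add_cancel]

lemma pow_finVal_injective (hm : orderOf a = m) : Function.Injective fun j : Fin m ↦ a ^ j.val :=
  fun j k h ↦ Fin.ext <| pow_injOn_Iio_orderOf (hm ▸ j.isLt) (hm ▸ k.isLt) h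

lemma pow_finVal_eq_self_iff (hm : orderOf a = m) (hm1 : 1 < m) (j : Fin m) :
    a ^ j.val = a ↔ j.val = 1 :=
  ⟨fun h ↦ pow_injOn_Iio_orderOf (hm ▸ j.isLt) (hm ▸ hm1) (h.trans (pow_one a).symm),
    fun h ↦ by rw [h, pow_one]⟩

lemma pow_ne_self_of_lt (hm : orderOf a = m) {i : ℕ} (hi : 1 < i) (him : i < m) : a ^ i ≠ a := by
  refine fun h ↦ pow_ne_one_of_lt_orderOf (n := i - 1) (by omega) (by rw [hm]; omega) ?_
  rw [← mul_left_inj a, ← pow_succ, Nat.sub_add_cancel (by omega), h, one_mul]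

lemma pow_ne_inv_of_lt (hm : orderOf a = m) {i : ℕ} (him : i + 1 < m) : a ^ i ≠ a⁻¹ :=
  fun h ↦ pow_ne_one_of_lt_orderOf (n := i + 1) (by omega) (by rw [hm]; omega)
    (by rw [pow_succ, h, inv_mul_cancel])

lemma range_pow_finVal_mul (hm : orderOf a = m) (hm0 : 0 < m) (b : G) :
    Set.range (fun j : Fin m ↦ a ^ j.val * b) = {x | ∃ j : ℕ, x = a ^ j * b} := by
  ext x
  constructor
  · rintro ⟨j, rfl⟩
    exact ⟨j.val, rfl⟩
  · rintro ⟨n, rfl⟩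
    refine ⟨⟨n % m, Nat.mod_lt n hm0⟩, ?_⟩
    simp only [← hm, pow_mod_orderOf]

end OrderOf

section Cayley

variable {G : Type*} [Group G] {S : Set G} {a : G} {m : ℕ}

lemma cayleyGraph_adj {x y : G} :
    (cayleyGraph S).Adj x y ↔ x ≠ y ∧ x * y⁻¹ ∈ S ∧ y * x⁻¹ ∈ S :=
  Iff.rfl

lemma cayleyGraph_adj_mul_right {x y : G} (b : G) :
    (cayleyGraph S).Adj (x * b) (y * b) ↔ (cayleyGraph S).Adj x y := by
  simp [cayleyGraph_adj]

lemma cayleyGraph_adj_iff_of_inv_mem (hS : ∀ s ∈ S, s⁻¹ ∈ S) {x y : G} :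
    (cayleyGraph S).Adj x y ↔ x ≠ y ∧ x * y⁻¹ ∈ S :=
  ⟨fun h ↦ ⟨h.1, h.2.1⟩, fun h ↦ ⟨h.1, h.2, by simpa using hS _ h.2⟩⟩

lemma eq_or_eq_inv_of_commute_of_four_lt_egirth (hS : ∀ s ∈ S, s⁻¹ ∈ S) (h1 : (1 : G) ∉ S)
    (hgirth : 4 < (cayleyGraph S).egirth) {s t : G} (hs : s ∈ S) (ht : t ∈ S)
    (hst : Commute s t) : t = s ∨ t = s⁻¹ := by
  by_contra! hne
  have hs1 : s ≠ 1 := fun h ↦ h1 (h ▸ hs)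
  have ht1 : t ≠ 1 := fun h ↦ h1 (h ▸ ht)
  have hts : t * s ≠ 1 := fun h ↦ hne.2 (eq_inv_of_mul_eq_one_left h)
  have h₁ : (cayleyGraph S).Adj 1 s := (cayleyGraph_adj_iff_of_inv_mem hS).2 ⟨hs1.symm, by simpa using hS s hs⟩
  have h₂ : (cayleyGraph S).Adj s (t * s) :=
    (cayleyGraph_adj_iff_of_inv_mem hS).2 ⟨by simpa using ht1, by simpa using hS t ht⟩
  have h₃ : (cayleyGraph S).Adj (t * s) t :=
    (cayleyGraph_adj_iff_of_inv_mem hS).2 ⟨by simpa using hs1, by rwa [← hst.eq, mul_inv_cancel_right]⟩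
  have h₄ : (cayleyGraph S).Adj t 1 := (cayleyGraph_adj_iff_of_inv_mem hS).2 ⟨ht1, by simpa using ht⟩
  have hcycle : (Walk.cons h₁ (.cons h₂ (.cons h₃ (.cons h₄ .nil)))).IsCycle := by
    simp [Walk.cons_isCycle_iff, hs1, hs1.symm, ht1, hts, hts.symm, hne.1.symm]
  simpa using (egirth_le_length hcycle).trans_lt hgirth

lemma pow_finVal_sub_mem_iff_cycleGraph_adj (ha : a ∈ S) (ha' : a⁻¹ ∈ S)
    (hm : orderOf a = m) (hm1 : 1 < m) (hpow : ∀ n : ℕ, a ^ n ∈ S → a ^ n = a ∨ a ^ n = a⁻¹)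
    (j k : Fin m) : a ^ (j - k).val ∈ S ↔ (cycleGraph m).Adj j k := by
  have hswap : a ^ (k - j).val = (a ^ (j - k).val)⁻¹ := by
    rw [pow_finVal_sub hm, pow_finVal_sub hm, mul_inv_rev, inv_inv]
  rw [cycleGraph_adj', ← pow_finVal_eq_self_iff hm hm1, ← pow_finVal_eq_self_iff hm hm1, hswap,
    inv_eq_iff_eq_inv]
  exact ⟨hpow _, by rintro (h | h) <;> rwa [h]⟩

lemma cayleyGraph_adj_pow_finVal_mul_iff (ha : a ∈ S) (ha' : a⁻¹ ∈ S)
    (hm : orderOf a = m) (hm1 : 1 < m) (hpow : ∀ n : ℕ, a ^ n ∈ S → a ^ n = a ∨ a ^ n = a⁻¹)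
    (b : G) (j k : Fin m) :
    (cayleyGraph S).Adj (a ^ j.val * b) (a ^ k.val * b) ↔ (cycleGraph m).Adj j k := by
  have hmem := pow_finVal_sub_mem_iff_cycleGraph_adj ha ha' hm hm1 hpow
  have hne : a ^ j.val ≠ a ^ k.val ↔ j ≠ k := (pow_finVal_injective hm).ne_iff
  rw [cayleyGraph_adj_mul_right, cayleyGraph_adj, hne, ← pow_finVal_sub hm, ← pow_finVal_sub hm,
    hmem, hmem]
  exact ⟨fun h ↦ h.2.1, fun h ↦ ⟨h.ne, h, h.symm⟩⟩

theorem nonempty_induce_coset_iso_cycleGraph (ha : a ∈ S) (ha' : a⁻¹ ∈ S)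
    (hm : orderOf a = m) (hm1 : 1 < m) (hpow : ∀ n : ℕ, a ^ n ∈ S → a ^ n = a ∨ a ^ n = a⁻¹)
    (b : G) :
    Nonempty ((cayleyGraph S).induce {x : G | ∃ j : ℕ, x = a ^ j * b} ≃g cycleGraph m) := by
  let f : cycleGraph m ↪g cayleyGraph S :=
    ⟨⟨fun j ↦ a ^ j.val * b, fun j k h ↦ pow_finVal_injective hm (mul_right_cancel h)⟩,
      cayleyGraph_adj_pow_finVal_mul_iff ha ha' hm hm1 hpow b _ _⟩
  rw [← range_pow_finVal_mul hm (by omega) b]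
  exact ⟨f.isoInduceRange.symm⟩

end Cayley

/-- If `Cay(G, S)` has girth `> 4` and `a ∈ S` has finite order `m > 2`, then the girth is at
most `m`, no proper intermediate power of `a` lies in `S`, and every right coset `⟨a⟩b`
induces an `m`-cycle; hence the vertices are partitioned into induced `m`-cycles. -/
theorem stmt_2 {G : Type*} [Group G] (S : Set G)
    (hS : ∀ s ∈ S, s⁻¹ ∈ S) (h1 : (1 : G) ∉ S)
    (hgirth : 4 < (cayleyGraph S).egirth)
    (a : G) (ha : a ∈ S) (m : ℕ) (hm : orderOf a = m) (hm2 : 2 < m) :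
    (cayleyGraph S).egirth ≤ m ∧
    (∀ i : ℕ, 1 < i → i < m - 1 → a ^ i ∉ S) ∧
    ∀ b : G, Nonempty
      ((cayleyGraph S).induce {x : G | ∃ j : ℕ, x = a ^ j * b} ≃g SimpleGraph.cycleGraph m) := by
  have hpow (n : ℕ) (hn : a ^ n ∈ S) : a ^ n = a ∨ a ^ n = a⁻¹ :=
    eq_or_eq_inv_of_commute_of_four_lt_egirth hS h1 hgirth ha hn (Commute.self_pow a n)
  have hcoset := nonempty_induce_coset_iso_cycleGraph ha (hS a ha) hm (by omega) hpow
  obtain ⟨e⟩ := hcoset 1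
  refine ⟨egirth_le_of_cycleGraph_isContained hm2
    (e.isContained'.trans (Embedding.induce _).isContained), fun i hi hi' hiS ↦ ?_, hcoset⟩
  exact (hpow i hiS).elim (pow_ne_self_of_lt hm hi (by omega)) (pow_ne_inv_of_lt hm (by omega))
end

section
/- For every finite group G of order 45 and every inverse-closed subset S ⊆ G with 1 ∉ S and |S| = 4, the Cayley graph Cay(G,S) is not distance-regular with intersection array {4,2,2,2; 1,1,1,2}. Equivalently, the line graph of Tutte's 8-cage — the unique distance-regular graph with intersection array {4,2,2,2; 1,1,1,2}, which has 45 vertices — is not a Cayley graph. -/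
/-- `Γ.IsDRGWith b c` means that `Γ` is a distance-regular graph with intersection array
`{b₀, …, b_{d-1}; c₁, …, c_d}`, where `d` is the diameter of `Γ`. -/
def SimpleGraph.IsDRGWith {V : Type*} (Γ : SimpleGraph V) (b c : List ℕ) : Prop :=
  Γ.Connected ∧ c.length = b.length ∧
  (∀ x y : V, Γ.dist x y ≤ b.length) ∧
  (∃ x y : V, Γ.dist x y = b.length) ∧
  ∀ (i : ℕ) (x y : V), Γ.dist x y = i →
    (i < b.length → {z : V | Γ.Adj y z ∧ Γ.dist x z = i + 1}.ncard = b.getD i 0) ∧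
    (1 ≤ i → {z : V | Γ.Adj y z ∧ Γ.dist x z = i - 1}.ncard = c.getD (i - 1) 0)

/-!
A group of order 45 is abelian: its Sylow subgroups, of orders 9 and 5, are normal by Sylow
counting. In an abelian Cayley graph the elements `s` and `t` are two common neighbours of `1`
and `s * t`, so `c₂ = 1` forces `s * t ∈ S` whenever `s ≠ t` and `s * t ≠ 1`. As the order is
odd, `S = {a, a⁻¹, b, b⁻¹}`, and this closure property forces, say, `b = a⁻²` and `a ^ 5 = 1`.
Then `S` lies in a subgroup of order at most 5, so the graph is not connected.
-/

theorem Sylow.normal_of_forall_dvd_card {G : Type*} [Group G] [Finite G] {p : ℕ}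
    [hp : Fact p.Prime] (P : Sylow p G)
    (h : p ∣ Nat.card G → ∀ n, n ∣ Nat.card G → n % p = 1 → n = 1) :
    (P : Subgroup G).Normal := by
  by_cases hpG : p ∣ Nat.card G
  · have hdvd : Nat.card (Sylow p G) ∣ Nat.card G :=
      P.card_dvd_index.trans (P : Subgroup G).index_dvd_card
    have hmod : Nat.card (Sylow p G) % p = 1 :=
      Eq.trans (card_sylow_modEq_one p G) (Nat.mod_eq_of_lt hp.out.one_lt)
    have : Subsingleton (Sylow p G) :=
      Finite.card_le_one_iff_subsingleton.mp (h hpG _ hdvd hmod).le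
    exact P.normal_of_subsingleton
  · rw [Subgroup.eq_bot_of_card_eq (P : Subgroup G) (by
      rw [P.card_eq_multiplicity, Nat.factorization_eq_zero_of_not_dvd hpG, pow_zero])]
    infer_instance

theorem isMulCommutative_of_card_dvd_prime_sq {H : Type*} [Group H] {p : ℕ}
    [hp : Fact p.Prime] (h : Nat.card H ∣ p ^ 2) : IsMulCommutative H := by
  obtain ⟨k, hk, hcard⟩ := (Nat.dvd_prime_pow hp.out).mp h
  interval_cases k
  · exact (isCyclic_of_card_dvd_prime (p := p) (by simp [hcard])).isMulCommutative
  · exact (isCyclic_of_card_dvd_prime (by rw [hcard, pow_one])).isMulCommutative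
  · exact IsPGroup.isMulCommutative_of_card_eq_prime_sq hcard

theorem isMulCommutative_of_sylow {G : Type*} [Group G] [Finite G]
    (hn : ∀ {p : ℕ} [Fact p.Prime] (P : Sylow p G), (P : Subgroup G).Normal)
    (hc : ∀ {p : ℕ} [Fact p.Prime] (P : Sylow p G), IsMulCommutative P) :
    IsMulCommutative G := by
  have : ∀ (p : (Nat.card G).primeFactors) (P : Sylow p G), IsMulCommutative P := fun p P =>
    have : Fact (p : ℕ).Prime := ⟨Nat.prime_of_mem_primeFactors p.2⟩
    hc P
  let e := Sylow.directProductOfNormal hn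
  refine isMulCommutative_iff.mpr fun x y => ?_
  obtain ⟨x, rfl⟩ := e.surjective x
  obtain ⟨y, rfl⟩ := e.surjective y
  rw [← map_mul, ← map_mul, mul_comm' x y]

theorem isMulCommutative_of_card_eq_45 {G : Type*} [Group G] (hG : Nat.card G = 45) :
    IsMulCommutative G := by
  have : Finite G := Nat.finite_of_card_ne_zero (by omega)
  refine isMulCommutative_of_sylow (fun P => P.normal_of_forall_dvd_card ?_) fun {p} hp P => ?_
  · rw [hG]
    intro hpG n hn
    exact (by decide : ∀ p ∈ Nat.divisors 45, ∀ n ∈ Nat.divisors 45, n % p = 1 → n = 1)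
      _ (by simpa using hpG) n (by simpa using hn)
  · obtain ⟨k, hk⟩ := IsPGroup.iff_card.mp P.isPGroup'
    have hdvd : p ^ k ∣ 45 := hk ▸ hG ▸ (P : Subgroup G).card_subgroup_dvd_card
    refine isMulCommutative_of_card_dvd_prime_sq (p := p) (hk ▸ pow_dvd_pow p ?_)
    by_contra! hk3
    have hp3 : p ^ 3 ∣ 45 := (pow_dvd_pow p hk3).trans hdvd
    have := (by decide : ∀ p ∈ Nat.divisors 45, p ^ 3 ∣ 45 → p = 1)
      p (by simpa using (dvd_pow_self p three_ne_zero).trans hp3) hp3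
    exact hp.out.one_lt.ne' this

theorem cayleyGraph_adj_iff {G : Type*} [Group G] {S : Set G} (hS : ∀ s ∈ S, s⁻¹ ∈ S)
    (h1 : (1 : G) ∉ S) {a b : G} : (cayleyGraph S).Adj a b ↔ a * b⁻¹ ∈ S :=
  ⟨fun h => h.2.1, fun h =>
    ⟨fun hab => h1 (by simpa [hab] using h), h, by simpa using hS _ h⟩⟩

theorem closure_eq_top_of_cayleyGraph_connected {G : Type*} [Group G] {S : Set G}
    (h : (cayleyGraph S).Connected) : Subgroup.closure S = ⊤ := by
  have walk_mem : ∀ {x y : G}, (cayleyGraph S).Walk x y →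
      x ∈ Subgroup.closure S → y ∈ Subgroup.closure S := by
    intro x y w
    induction w with
    | nil => exact id
    | @cons u v _ huv _ ih =>
      intro hu
      apply ih
      simpa using Subgroup.mul_mem _ (Subgroup.subset_closure huv.2.2) hu
  exact (Subgroup.eq_top_iff' _).mpr fun g =>
    walk_mem (h.preconnected 1 g).some (Subgroup.one_mem _)

-- `c.getD 1 0` is the intersection number `c₂`: the list `c` is indexed from 0.
theorem SimpleGraph.IsDRGWith.adj_of_two_common_neighbors {V : Type*} [Finite V]
    {Γ : SimpleGraph V} {b c : List ℕ} (hΓ : Γ.IsDRGWith b c) (hc : c.getD 1 0 ≤ 1)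
    {x y u v : V} (hxy : x ≠ y) (huv : u ≠ v) (hxu : Γ.Adj x u) (huy : Γ.Adj u y)
    (hxv : Γ.Adj x v) (hvy : Γ.Adj v y) :
    Γ.Adj x y := by
  by_contra hnadj
  have hdist : Γ.dist x y = 2 := by
    have hle : Γ.dist x y ≤ 2 :=
      (SimpleGraph.dist_le (hxu.toWalk.append huy.toWalk)).trans (by simp)
    have hpos : 0 < Γ.dist x y := (hxu.reachable.trans huy.reachable).pos_dist_of_ne hxy
    have hne : Γ.dist x y ≠ 1 := fun h => hnadj (SimpleGraph.dist_eq_one_iff_adj.mp h)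
    omega
  have hμ : {z | Γ.Adj y z ∧ Γ.dist x z = 1}.ncard = c.getD 1 0 :=
    (hΓ.2.2.2.2 2 x y hdist).2 one_le_two
  have hsub : ({u, v} : Set V) ⊆ {z | Γ.Adj y z ∧ Γ.dist x z = 1} := by
    rintro z (rfl | rfl)
    · exact ⟨huy.symm, SimpleGraph.dist_eq_one_iff_adj.mpr hxu⟩
    · exact ⟨hvy.symm, SimpleGraph.dist_eq_one_iff_adj.mpr hxv⟩
  have := Set.ncard_le_ncard hsub (Set.toFinite _)
  rw [Set.ncard_pair huv, hμ] at this
  omega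

theorem SimpleGraph.IsDRGWith.mul_mem_of_commute {G : Type*} [Group G] [Finite G] {S : Set G}
    (hS : ∀ s ∈ S, s⁻¹ ∈ S) (h1 : (1 : G) ∉ S) {b c : List ℕ}
    (hD : (cayleyGraph S).IsDRGWith b c) (hc : c.getD 1 0 ≤ 1) {s t : G} (hs : s ∈ S)
    (ht : t ∈ S) (hst : s ≠ t) (hcomm : Commute s t) (hst1 : s * t ≠ 1) : s * t ∈ S := by
  have hadj : ∀ {x y : G}, x * y⁻¹ ∈ S → (cayleyGraph S).Adj x y :=
    (cayleyGraph_adj_iff hS h1).mpr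
  have hst_1 : (cayleyGraph S).Adj (s * t) 1 :=
    hD.adj_of_two_common_neighbors hc hst1 hst
      (hadj (by rwa [hcomm.eq, mul_inv_cancel_right]))
      (hadj (by rwa [inv_one, mul_one]))
      (hadj (by rwa [mul_inv_cancel_right]))
      (hadj (by rwa [inv_one, mul_one]))
  simpa using (cayleyGraph_adj_iff hS h1).mp hst_1

theorem eq_one_of_inv_eq_self {G : Type*} [Group G] (hG : (Nat.card G).Coprime 2) {s : G}
    (h : s⁻¹ = s) : s = 1 :=
  (Nat.Coprime.pow_left_bijective hG).injective <| by
    simpa [sq] using inv_eq_iff_mul_eq_one.mp h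

theorem exists_eq_insert_inv_insert_inv {α : Type*} [InvolutiveInv α] {S : Set α}
    (hS : ∀ s ∈ S, s⁻¹ ∈ S) (hinv : ∀ s ∈ S, s⁻¹ ≠ s) (hcard : S.ncard = 4) :
    ∃ a b : α, S = {a, a⁻¹, b, b⁻¹} ∧ a⁻¹ ≠ a ∧ b⁻¹ ≠ b ∧ a ≠ b ∧ a ≠ b⁻¹ := by
  obtain ⟨a, ha⟩ := Set.nonempty_of_ncard_ne_zero (s := S) (by omega)
  have hrest : (S \ {a, a⁻¹}).ncard ≠ 0 := by
    have := Set.ncard_le_ncard_sdiff_add_ncard S {a, a⁻¹}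
    have := Set.ncard_insert_le a {a⁻¹}
    rw [Set.ncard_singleton] at this
    omega
  obtain ⟨b, hb, hba⟩ := Set.nonempty_of_ncard_ne_zero hrest
  simp only [Set.mem_insert_iff, Set.mem_singleton_iff, not_or] at hba
  have hab : a ≠ b := Ne.symm hba.1
  have hab' : a ≠ b⁻¹ := fun h => hba.2 (by rw [h, inv_inv])
  have h4 : ({a, a⁻¹, b, b⁻¹} : Set α).ncard = 4 := by
    rw [Set.ncard_insert_of_notMem (by simp [(hinv a ha).symm, hab, hab']),
      Set.ncard_insert_of_notMem (by simp [Ne.symm hba.2, inv_eq_iff_eq_inv, hab]),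
      Set.ncard_pair (hinv b hb).symm]
  have hsub : ({a, a⁻¹, b, b⁻¹} : Set α) ⊆ S := by
    simp [Set.insert_subset_iff, ha, hb, hS a ha, hS b hb]
  refine ⟨a, b, (Set.eq_of_subset_of_ncard_le hsub (by omega)
    (Set.finite_of_ncard_ne_zero (by omega))).symm, hinv a ha, hinv b hb, hab, hab'⟩

theorem pow_five_eq_one_of_mul_eq_inv {G : Type*} [Group G] {a b : G} (ha : a⁻¹ ≠ a)
    (hb : b⁻¹ ≠ b) (hab : a * b = a⁻¹) (h : a * b⁻¹ ∈ ({a, a⁻¹, b, b⁻¹} : Set G)) :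
    a ^ 5 = 1 := by
  obtain rfl : b = a⁻¹ * a⁻¹ := eq_inv_mul_of_mul_eq hab
  rw [Ne, ← mul_inv_eq_one] at ha hb
  simp only [Set.mem_insert_iff, Set.mem_singleton_iff] at h
  rcases h with h | h | h | h <;> rw [← mul_inv_eq_one] at h <;> group at h ha hb
  · exact absurd (by rw [zpow_neg, h, inv_one]) ha
  · exact absurd h hb
  · exact_mod_cast h
  · exact absurd (by simp [h]) ha

theorem exists_pow_five_eq_one_of_mul_mem {G : Type*} [Group G] {S : Set G} {a b : G}
    (hS : S = {a, a⁻¹, b, b⁻¹}) (hcomm : Commute a b) (ha : a⁻¹ ≠ a) (hb : b⁻¹ ≠ b)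
    (hab : a ≠ b) (hab' : a ≠ b⁻¹) (hmul : ∀ s ∈ S, ∀ t ∈ S, s ≠ t → s * t ≠ 1 → s * t ∈ S) :
    ∃ g : G, g ^ 5 = 1 ∧ S ⊆ Subgroup.zpowers g := by
  subst hS
  have subset_of_mem {H : Subgroup G} (ha : a ∈ H) (hb : b ∈ H) :
      ({a, a⁻¹, b, b⁻¹} : Set G) ⊆ H := by
    simp [Set.insert_subset_iff, ha, hb]
  have mem_zpowers_of_mul_eq_inv {x y : G} (h : y * x = y⁻¹) : x ∈ Subgroup.zpowers y := by
    rw [eq_inv_mul_of_mul_eq h]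
    exact mul_mem (inv_mem (Subgroup.mem_zpowers y)) (inv_mem (Subgroup.mem_zpowers y))
  have hab_mem := hmul a (by simp) b (by simp) hab fun h => hab' (eq_inv_of_mul_eq_one_left h)
  simp only [Set.mem_insert_iff, Set.mem_singleton_iff, mul_eq_left, mul_eq_right] at hab_mem
  rcases hab_mem with h | h | h | h
  · exact absurd (by simp [h]) hb
  · have hab_inv := hmul a (by simp) b⁻¹ (by simp) hab' fun h => hab (mul_inv_eq_one.mp h)
    exact ⟨a, pow_five_eq_one_of_mul_eq_inv ha hb h hab_inv,
      subset_of_mem (Subgroup.mem_zpowers a) (mem_zpowers_of_mul_eq_inv h)⟩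
  · exact absurd (by simp [h]) ha
  · rw [hcomm.eq] at h
    have hba_inv := hmul b (by simp) a⁻¹ (by simp) (fun h => hab' (by rw [h, inv_inv]))
      fun h => hab (mul_inv_eq_one.mp h).symm
    refine ⟨b, pow_five_eq_one_of_mul_eq_inv hb ha h ?_,
      subset_of_mem (mem_zpowers_of_mul_eq_inv h) (Subgroup.mem_zpowers b)⟩
    simp only [Set.mem_insert_iff, Set.mem_singleton_iff] at hba_inv ⊢
    tauto

/-- The line graph of Tutte's 8-cage (the unique distance-regular graph with intersection
array {4,2,2,2; 1,1,1,2}, on 45 vertices) is not a Cayley graph. -/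
theorem stmt_4 {G : Type*} [Group G] [Fintype G] (S : Set G)
    (hS : ∀ s ∈ S, s⁻¹ ∈ S) (h1 : (1 : G) ∉ S)
    (hG : Fintype.card G = 45) (hcard : S.ncard = 4) :
    ¬ (cayleyGraph S).IsDRGWith [4, 2, 2, 2] [1, 1, 1, 2] := by
  intro hD
  have hG' : Nat.card G = 45 := by rw [Nat.card_eq_fintype_card, hG]
  have := isMulCommutative_of_card_eq_45 hG'
  have hinv : ∀ s ∈ S, s⁻¹ ≠ s := by
    intro s hs hss
    exact h1 (eq_one_of_inv_eq_self (by rw [hG']; norm_num) hss ▸ hs)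
  obtain ⟨a, b, hSab, ha, hb, hab, hab'⟩ := exists_eq_insert_inv_insert_inv hS hinv hcard
  obtain ⟨g, hg, hSg⟩ := exists_pow_five_eq_one_of_mul_mem hSab (mul_comm' a b) ha hb hab hab'
    fun s hs t ht hst => hD.mul_mem_of_commute hS h1 le_rfl hs ht hst (mul_comm' s t)
  have htop : Subgroup.zpowers g = ⊤ :=
    top_unique <| closure_eq_top_of_cayleyGraph_connected hD.1 ▸
      (Subgroup.closure_le _).mpr hSg
  have : 45 ≤ 5 :=
    calc 45 = Nat.card (Subgroup.zpowers g) := by rw [htop, Subgroup.card_top, hG']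
      _ = orderOf g := Nat.card_zpowers g
      _ ≤ 5 := orderOf_le_of_pow_eq_one (by norm_num) hg
  omega
end

section
/- Let Γ be a simple graph whose girth is strictly greater than 10, and let a group G act on the vertex set of Γ by graph automorphisms, with the action free (g•x = x for some vertex x only if g is the identity). If g ∈ G has order 2, 3, or 5, then for every vertex x the vertices x and g•x are distinct and have no common neighbor in Γ. -/
/-!
If `g` has prime order `p` and `z` is a common neighbour of `x` and `g • x`, the walk
`x, z, g • x, g • z, …, g ^ (p - 1) • z, x` is closed of length `2p ≤ 10`. Freeness makes
it a cycle unless `z = g ^ k • x` for some `2 ≤ k < p`; then `x` is adjacent to `g ^ k • x`,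
and the orbit of `x` under `g ^ k`, which again has order `p ≥ 3`, is a cycle of length `p`.
-/

open SimpleGraph

namespace SimpleGraph

variable {V : Type*} {Γ : SimpleGraph V}

theorem egirth_le_of_periodic {f : ℕ → V} {m : ℕ} (hm : 2 < m) (hper : Function.Periodic f m)
    (hinj : Set.InjOn f (Set.Iio m)) (hadj : ∀ i, Γ.Adj (f i) (f (i + 1))) :
    Γ.egirth ≤ m := by
  obtain ⟨n, rfl⟩ : ∃ n, m = n + 2 := ⟨m - 2, by omega⟩
  have hsucc (b : Fin (n + 2)) : Γ.Adj (f b) (f ↑(b + 1)) := by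
    rw [Fin.val_add, Fin.val_one, hper.map_mod_nat]
    exact hadj b
  have hcopy : cycleGraph (n + 2) ⊑ Γ := by
    refine ⟨⟨⟨fun i => f i, fun {a b} hab => ?_⟩,
      fun a b hab => Fin.ext (hinj a.isLt b.isLt hab)⟩⟩
    rcases hab with hab | hab
    · rw [sub_eq_iff_eq_add'] at hab
      subst hab
      exact (hsucc b).symm
    · rw [sub_eq_iff_eq_add'] at hab
      subst hab
      exact hsucc a
  obtain ⟨v, p, hp, hlen⟩ := (cycleGraph_isContained_iff hm).mp hcopy
  exact hlen ▸ egirth_le_length hp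

end SimpleGraph

namespace MulAction

variable {V : Type*} {Γ : SimpleGraph V} {G : Type*} [Group G] [MulAction G V]

theorem pow_smul_injOn_Iio_orderOf (hfree : ∀ (g : G) (x : V), g • x = x → g = 1) (h : G)
    (y : V) : Set.InjOn (fun i : ℕ => h ^ i • y) (Set.Iio (orderOf h)) := fun i hi j hj hij =>
  pow_injOn_Iio_orderOf hi hj
    (inv_mul_eq_one.mp (hfree _ y (by simp only at hij; rw [mul_smul, hij, inv_smul_smul]))).symm

theorem pow_smul_periodic (h : G) (y : V) :
    Function.Periodic (fun i : ℕ => h ^ i • y) (orderOf h) := fun i => by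
  simp only [pow_add, pow_orderOf_eq_one, mul_one]

theorem adj_pow_smul_pow_succ_smul
    (hact : ∀ (g : G) (x y : V), Γ.Adj x y → Γ.Adj (g • x) (g • y)) {h : G} {y z : V}
    (hadj : Γ.Adj z (h • y)) (k : ℕ) :
    Γ.Adj (h ^ k • z) (h ^ (k + 1) • y) := by
  simpa only [smul_smul, ← pow_succ] using hact (h ^ k) _ _ hadj

theorem egirth_le_orderOf (hact : ∀ (g : G) (x y : V), Γ.Adj x y → Γ.Adj (g • x) (g • y))
    (hfree : ∀ (g : G) (x : V), g • x = x → g = 1) {h : G} (hh : 2 < orderOf h) {y : V}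
    (hadj : Γ.Adj y (h • y)) : Γ.egirth ≤ orderOf h :=
  egirth_le_of_periodic hh (pow_smul_periodic h y) (pow_smul_injOn_Iio_orderOf hfree h y)
    (adj_pow_smul_pow_succ_smul hact hadj)

def zigzag (h : G) (y z : V) (i : ℕ) : V := h ^ (i / 2) • if Even i then y else z

@[simp]
theorem zigzag_two_mul (h : G) (y z : V) (k : ℕ) : zigzag h y z (2 * k) = h ^ k • y := by
  simp [zigzag]

@[simp]
theorem zigzag_two_mul_add_one (h : G) (y z : V) (k : ℕ) :
    zigzag h y z (2 * k + 1) = h ^ k • z := by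
  simp [zigzag, Nat.add_div_of_dvd_right, Nat.not_even_bit1]

theorem zigzag_periodic (h : G) (y z : V) :
    Function.Periodic (zigzag h y z) (2 * orderOf h) := fun i => by
  obtain ⟨k, rfl | rfl⟩ := Nat.even_or_odd' i
  · rw [← mul_add, zigzag_two_mul, zigzag_two_mul]
    exact pow_smul_periodic h y k
  · rw [add_right_comm, ← mul_add, zigzag_two_mul_add_one, zigzag_two_mul_add_one]
    exact pow_smul_periodic h z k

theorem zigzag_injOn (hfree : ∀ (g : G) (x : V), g • x = x → g = 1) {h : G} {y z : V}
    (hz : z ∉ orbit (Subgroup.zpowers h) y) :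
    Set.InjOn (zigzag h y z) (Set.Iio (2 * orderOf h)) := by
  have hyz (a b : ℕ) : h ^ a • y ≠ h ^ b • z := fun e => hz
    ⟨⟨(h ^ b)⁻¹ * h ^ a, by simp [Subgroup.mul_mem, Subgroup.pow_mem]⟩,
      by simp [mul_smul, e]⟩
  intro i hi j hj hij
  simp only [Set.mem_Iio] at hi hj
  obtain ⟨a, rfl | rfl⟩ := Nat.even_or_odd' i <;>
    obtain ⟨b, rfl | rfl⟩ := Nat.even_or_odd' j <;>
    simp only [zigzag_two_mul, zigzag_two_mul_add_one] at hij
  · rw [pow_smul_injOn_Iio_orderOf hfree h y (by simp; omega) (by simp; omega) hij]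
  · exact absurd hij (hyz a b)
  · exact absurd hij.symm (hyz b a)
  · rw [pow_smul_injOn_Iio_orderOf hfree h z (by simp; omega) (by simp; omega) hij]

theorem egirth_le_two_mul_orderOf
    (hact : ∀ (g : G) (x y : V), Γ.Adj x y → Γ.Adj (g • x) (g • y))
    (hfree : ∀ (g : G) (x : V), g • x = x → g = 1) {h : G} (hh : 1 < orderOf h) {y z : V}
    (hyz : Γ.Adj y z) (hzy : Γ.Adj z (h • y)) (hz : z ∉ orbit (Subgroup.zpowers h) y) :
    Γ.egirth ≤ ↑(2 * orderOf h) := by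
  refine egirth_le_of_periodic (by omega) (zigzag_periodic h y z) (zigzag_injOn hfree hz) ?_
  intro i
  obtain ⟨k, rfl | rfl⟩ := Nat.even_or_odd' i
  · simpa using hact (h ^ k) _ _ hyz
  · rw [show 2 * k + 1 + 1 = 2 * (k + 1) by ring, zigzag_two_mul, zigzag_two_mul_add_one]
    exact adj_pow_smul_pow_succ_smul hact hzy k

theorem exists_pow_smul_eq_of_mem_orbit_zpowers {h : G} (hh : 0 < orderOf h) {y z : V}
    (hz : z ∈ orbit (Subgroup.zpowers h) y) : ∃ k < orderOf h, h ^ k • y = z := by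
  obtain ⟨⟨g, hg⟩, rfl⟩ := hz
  obtain ⟨n, rfl⟩ := (orderOf_pos_iff.mp hh).mem_powers_iff_mem_zpowers.mpr hg
  exact ⟨n % orderOf h, Nat.mod_lt _ hh, by rw [pow_mod_orderOf]; rfl⟩

end MulAction

/-- Let `Γ` be a simple graph of girth strictly greater than `10`, and let a group `G` act
freely on its vertices by graph automorphisms. If `g ∈ G` has order `2`, `3`, or `5`, then for
every vertex `x`, the vertices `x` and `g • x` are distinct and have no common neighbor. -/
theorem stmt_6 {V : Type*} (Γ : SimpleGraph V) (hgirth : 10 < Γ.egirth)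
    {G : Type*} [Group G] [MulAction G V]
    (hact : ∀ (g : G) (x y : V), Γ.Adj x y → Γ.Adj (g • x) (g • y))
    (hfree : ∀ (g : G) (x : V), g • x = x → g = 1)
    (g : G) (horder : orderOf g = 2 ∨ orderOf g = 3 ∨ orderOf g = 5) :
    ∀ x : V, g • x ≠ x ∧ ∀ z : V, ¬ (Γ.Adj x z ∧ Γ.Adj (g • x) z) := by
  have hprime : (orderOf g).Prime := by rcases horder with h | h | h <;> rw [h] <;> norm_num
  have hshort (n : ℕ) (hn : n ≤ 10) : ¬ Γ.egirth ≤ n := fun h =>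
    (hgirth.trans_le h).not_ge (by exact_mod_cast hn)
  intro x
  refine ⟨fun e => hprime.one_lt.ne' (orderOf_eq_one_iff.mpr (hfree g x e)), ?_⟩
  rintro z ⟨hxz, hzx⟩
  by_cases hz : z ∈ MulAction.orbit (Subgroup.zpowers g) x
  · obtain ⟨k, hk, rfl⟩ := MulAction.exists_pow_smul_eq_of_mem_orbit_zpowers hprime.pos hz
    have hk0 : k ≠ 0 := by rintro rfl; simp at hxz
    have hk1 : k ≠ 1 := by rintro rfl; simp at hzx
    have := Fact.mk hprime
    have hord : orderOf (g ^ k) = orderOf g :=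
      orderOf_eq_prime (by rw [← pow_mul, mul_comm, pow_mul, pow_orderOf_eq_one, one_pow])
        (pow_ne_one_of_lt_orderOf hk0 hk)
    exact hshort _ (by omega) (hord ▸ MulAction.egirth_le_orderOf hact hfree (by omega) hxz)
  · exact hshort _ (by omega)
      (MulAction.egirth_le_two_mul_orderOf hact hfree hprime.one_lt hxz hzx.symm hz)
end

section
/- For every finite group G and every inverse-closed subset S ⊆ G with 1 ∉ S, the Cayley graph Cay(G,S) is not distance-regular with intersection array {5,4,4,4; 1,1,1,5}. Equivalently, the incidence graph of the generalized quadrangle GQ(4,4) — the unique distance-regular graph with this intersection array, on 170 vertices — is not a Cayley graph. -/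
/-!
Write `Γ` for a distance-regular graph with intersection array {5,4,4,4; 1,1,1,5}. Since
`b_i + c_i = 5` for `1 ≤ i ≤ 4` (with `b₄ = 0`), every edge of `Γ` joins consecutive distance
layers around any vertex, so `Γ` is bipartite; the layers have sizes 1, 5, 20, 80, 64, and two vertices at distance 4 have
`c₄ c₃ / c₂ = 5` common vertices at distance 2 from both. If `Γ = Cay(G, S)`, right
multiplications are automorphisms, so the elements at even distance from `1` form a subgroup `H`
of order 1 + 20 + 64 = 5 · 17, which is cyclic by Sylow. For `h` at distance 4 the map
`d ↦ d⁻¹ h` is an involution (as `H` is abelian) of those 5 common vertices, so it has a fixed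
point, and `h = d²` with `d` at distance 2. Squaring would then map 20 elements onto 64.
-/

section GroupTheory

variable {G : Type*} [Group G] [Finite G]

theorem Sylow.normal_of_card_eq_prime_mul {p q : ℕ} [Fact p.Prime] (hq : q.Prime) (hpq : p ≠ q)
    (hq1 : ¬q ≡ 1 [MOD p]) (hG : Nat.card G = p * q) (P : Sylow p G) :
    (P : Subgroup G).Normal := by
  have hp : p.Prime := Fact.out
  have hcard : Nat.card P = p := by
    rw [P.card_eq_multiplicity, hG, Nat.factorization_mul hp.ne_zero hq.ne_zero,
      Finsupp.add_apply, hp.factorization_self, Nat.factorization_eq_zero_of_not_dvd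
        (fun h => hpq ((Nat.prime_dvd_prime_iff_eq hp hq).mp h)), pow_one]
  have hindex : (P : Subgroup G).index = q := by
    have := (P : Subgroup G).card_mul_index
    rw [hcard, hG] at this
    exact Nat.eq_of_mul_eq_mul_left hp.pos this
  have hone : Nat.card (Sylow p G) = 1 :=
    (hq.eq_one_or_self_of_dvd _ (hindex ▸ P.card_dvd_index)).resolve_right
      fun h => hq1 (h ▸ card_sylow_modEq_one p G)
  have := (Nat.card_eq_one_iff_unique.mp hone).1
  exact P.normal_of_subsingleton

theorem isCyclic_of_card_eq_prime_mul_prime {p q : ℕ} (hp : p.Prime) (hq : q.Prime)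
    (hpq : p ≠ q) (hq1 : ¬q ≡ 1 [MOD p]) (hp1 : ¬p ≡ 1 [MOD q]) (hG : Nat.card G = p * q) :
    IsCyclic G := by
  have := Fact.mk hp
  have := Fact.mk hq
  obtain ⟨x, hx⟩ := exists_prime_orderOf_dvd_card' p (hG ▸ dvd_mul_right p q)
  obtain ⟨y, hy⟩ := exists_prime_orderOf_dvd_card' q (hG ▸ dvd_mul_left q p)
  have hxp : IsPGroup p (Subgroup.zpowers x) :=
    .of_card (n := 1) (by rw [Nat.card_zpowers, hx, pow_one])
  have hyq : IsPGroup q (Subgroup.zpowers y) :=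
    .of_card (n := 1) (by rw [Nat.card_zpowers, hy, pow_one])
  obtain ⟨P, hxP⟩ := hxp.exists_le_sylow
  obtain ⟨Q, hyQ⟩ := hyq.exists_le_sylow
  have hxy : Commute x y :=
    Subgroup.commute_of_normal_of_disjoint _ _ (P.normal_of_card_eq_prime_mul hq hpq hq1 hG)
      (Q.normal_of_card_eq_prime_mul hp hpq.symm hp1 (by rw [hG, mul_comm]))
      (IsPGroup.disjoint_of_ne p q hpq _ _ P.isPGroup' Q.isPGroup')
      x y (hxP (Subgroup.mem_zpowers x)) (hyQ (Subgroup.mem_zpowers y))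
  have hcop : (orderOf x).Coprime (orderOf y) := hx ▸ hy ▸ (Nat.coprime_primes hp hq).mpr hpq
  exact isCyclic_of_orderOf_eq_card (x * y) (by
    rw [hxy.orderOf_mul_eq_mul_orderOf_of_coprime hcop, hx, hy, hG])

end GroupTheory

theorem Set.exists_fixed_of_involution_of_odd_ncard {α : Type*} {s : Set α} {f : α → α}
    (hf : Set.MapsTo f s s) (hff : ∀ a ∈ s, f (f a) = a) (hs : Odd s.ncard) :
    ∃ a ∈ s, f a = a := by
  obtain ⟨t, rfl⟩ := (Set.finite_of_ncard_ne_zero (Nat.ne_of_odd_add hs)).exists_finset_coe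
  by_contra! hfix
  have : ∏ _a ∈ t, (-1 : ℤ) = 1 :=
    Finset.prod_involution (fun a _ => f a) (fun _ _ => by norm_num) (fun a ha _ => hfix a ha)
      (fun a ha => hf ha) (fun a ha => hff a ha)
  rw [Finset.prod_const, ← Set.ncard_coe_finset, hs.neg_one_pow] at this
  norm_num at this

theorem Set.ncard_mul_eq_ncard_mul {α β : Type*} [Finite α] [Finite β] {s : Set α} {t : Set β}
    (r : α → β → Prop) {m n : ℕ} (hm : ∀ a ∈ s, {b ∈ t | r a b}.ncard = m)
    (hn : ∀ b ∈ t, {a ∈ s | r a b}.ncard = n) : s.ncard * m = t.ncard * n := by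
  classical
  obtain ⟨s, rfl⟩ := s.toFinite.exists_finset_coe
  obtain ⟨t, rfl⟩ := t.toFinite.exists_finset_coe
  simp only [Set.ncard_coe_finset]
  refine Finset.card_mul_eq_card_mul r (fun a ha => ?_) (fun b hb => ?_)
  · rw [← hm a ha, Finset.bipartiteAbove, ← Set.ncard_coe_finset, Finset.coe_filter]; rfl
  · rw [← hn b hb, Finset.bipartiteBelow, ← Set.ncard_coe_finset, Finset.coe_filter]; rfl

namespace SimpleGraph

variable {V W : Type*} {G : SimpleGraph V} {G' : SimpleGraph W}

theorem Hom.edist_le (f : G →g G') (u v : V) : G'.edist (f u) (f v) ≤ G.edist u v := by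
  by_cases h : G.Reachable u v
  · obtain ⟨p, hp⟩ := h.exists_walk_length_eq_edist
    exact hp ▸ (p.length_map f ▸ SimpleGraph.edist_le (p.map f))
  · rw [edist_eq_top_of_not_reachable h]
    exact le_top

theorem Iso.dist_eq (e : G ≃g G') (u v : V) : G'.dist (e u) (e v) = G.dist u v := by
  refine congrArg ENat.toNat (le_antisymm (e.toHom.edist_le u v) ?_)
  simpa using e.symm.toHom.edist_le (e u) (e v)

theorem Connected.even_dist_iff_of_forall_adj (hG : G.Connected)
    (h : ∀ x y z, G.Adj y z → G.dist x y ≠ G.dist x z) (u v w : V) :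
    Even (G.dist u v) ↔ (Even (G.dist u w) ↔ Even (G.dist w v)) := by
  let c : G.Coloring Bool := Coloring.mk (fun y => decide (Even (G.dist w y))) fun {y z} hyz => by
    have := h w y z hyz
    rcases hyz.diff_dist_adj (u := w) with h' | h' | h' <;> grind
  obtain ⟨p, hp⟩ := (hG.preconnected u v).exists_walk_length_eq_dist
  rw [← hp, c.even_length_iff_congr p, dist_comm (u := u)]
  change (decide (Even (G.dist w u)) ↔ decide (Even (G.dist w v))) ↔ _
  simp only [decide_eq_true_eq]

namespace IsDRGWith

variable {Γ : SimpleGraph V} {b c : List ℕ} {x y z : V} {i : ℕ}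

theorem ncard_adj_dist_succ (hd : Γ.IsDRGWith b c) (hxy : Γ.dist x y = i) :
    {z | Γ.Adj y z ∧ Γ.dist x z = i + 1}.ncard = b.getD i 0 := by
  by_cases hi : i < b.length
  · exact (hd.2.2.2.2 i x y hxy).1 hi
  · have hempty : {z | Γ.Adj y z ∧ Γ.dist x z = i + 1} = ∅ :=
      Set.eq_empty_of_forall_notMem fun z hz => by have := hd.2.2.1 x z; grind
    rw [hempty, Set.ncard_empty, List.getD_eq_default _ _ (not_lt.mp hi)]

theorem ncard_adj_dist_pred (hd : Γ.IsDRGWith b c) (hxy : Γ.dist x y = i + 1) :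
    {z | Γ.Adj y z ∧ Γ.dist x z = i}.ncard = c.getD i 0 := by
  simpa using (hd.2.2.2.2 (i + 1) x y hxy).2 (by omega)

theorem ncard_adj (hd : Γ.IsDRGWith b c) (y : V) : {z | Γ.Adj y z}.ncard = b.getD 0 0 := by
  simpa using hd.ncard_adj_dist_succ (x := y) dist_self

theorem ncard_dist_mul [Finite V] (hd : Γ.IsDRGWith b c) (x : V) (i : ℕ) :
    {y | Γ.dist x y = i}.ncard * b.getD i 0 = {y | Γ.dist x y = i + 1}.ncard * c.getD i 0 :=
  Set.ncard_mul_eq_ncard_mul Γ.Adj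
    (fun y hy => by
      rw [← hd.ncard_adj_dist_succ hy]
      exact congrArg _ (Set.ext fun _ => and_comm))
    (fun z hz => by
      rw [← hd.ncard_adj_dist_pred hz]
      exact congrArg _ (Set.ext fun _ => and_comm.trans (and_congr_left' (Γ.adj_comm _ _))))

/-- `hbc` says that `a_i = k - b_i - c_i` vanishes for `1 ≤ i ≤ d` (note `b.getD d 0 = 0`). -/
theorem dist_ne_of_adj [Finite V] (hd : Γ.IsDRGWith b c)
    (hbc : ∀ i < b.length, b.getD (i + 1) 0 + c.getD i 0 = b.getD 0 0) (hyz : Γ.Adj y z) :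
    Γ.dist x y ≠ Γ.dist x z := by
  intro hxyz
  obtain ⟨i, hi⟩ : ∃ i, Γ.dist x y = i + 1 := by
    refine Nat.exists_eq_add_one.mpr (Nat.pos_of_ne_zero fun h0 => hyz.ne ?_)
    rw [← (hd.1 x y).dist_eq_zero_iff.mp h0, (hd.1 x z).dist_eq_zero_iff.mp (hxyz ▸ h0)]
  have hsub : {w | Γ.Adj y w ∧ Γ.dist x w = i + 1 + 1} ∪
      {w | Γ.Adj y w ∧ Γ.dist x w = i} ⊆ {w | Γ.Adj y w} \ {z} := by
    rintro w (⟨hw, hxw⟩ | ⟨hw, hxw⟩) <;> exact ⟨hw, by rintro rfl; omega⟩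
  have hdisj : Disjoint {w | Γ.Adj y w ∧ Γ.dist x w = i + 1 + 1}
      {w | Γ.Adj y w ∧ Γ.dist x w = i} :=
    Set.disjoint_left.mpr fun w h h' => by have := h.2; have := h'.2; omega
  have hle := (Set.ncard_le_ncard hsub).trans_lt (Set.ncard_sdiff_singleton_lt_of_mem hyz)
  rw [Set.ncard_union_eq hdisj, hd.ncard_adj_dist_succ hi, hd.ncard_adj_dist_pred hi,
    hd.ncard_adj, hbc i (by have := hd.2.2.1 x y; omega)] at hle
  exact lt_irrefl _ hle

theorem ncard_dist_dist_two_mul [Finite V] (hd : Γ.IsDRGWith b c) {m : ℕ}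
    (hxy : Γ.dist x y = m + 2) :
    {z | Γ.dist x z = m ∧ Γ.dist z y = 2}.ncard * c.getD 1 0 =
      c.getD (m + 1) 0 * c.getD m 0 := by
  rw [← hd.ncard_adj_dist_pred (i := m + 1) hxy]
  refine Set.ncard_mul_eq_ncard_mul Γ.Adj (fun z ⟨hxz, hzy⟩ => ?_) (fun w ⟨hyw, hxw⟩ => ?_)
  · rw [← hd.ncard_adj_dist_pred (i := 1) (x := y) (y := z) (by rw [dist_comm, hzy])]
    refine congrArg _ (Set.ext fun w =>
      ⟨fun ⟨⟨hyw, _⟩, hzw⟩ => ⟨hzw, dist_eq_one_iff_adj.mpr hyw⟩,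
        fun ⟨hzw, hyw⟩ => ⟨⟨dist_eq_one_iff_adj.mp hyw, ?_⟩, hzw⟩⟩)
    have := hzw.diff_dist_adj (u := x)
    have := (dist_eq_one_iff_adj.mp hyw).diff_dist_adj (u := x)
    omega
  · rw [← hd.ncard_adj_dist_pred (i := m) hxw]
    refine congrArg _ (Set.ext fun z => ⟨fun ⟨⟨hxz, _⟩, hzw⟩ => ⟨hzw.symm, hxz⟩,
      fun ⟨hwz, hxz⟩ => ⟨⟨hxz, ?_⟩, hwz.symm⟩⟩)
    have := hwz.diff_dist_adj (u := y)
    have := dist_eq_one_iff_adj.mpr hyw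
    have := hd.1.dist_triangle (u := x) (v := z) (w := y)
    rw [dist_comm (u := z)] at this ⊢
    omega

end IsDRGWith

theorem Connected.ncard_dist_eq_zero {G : SimpleGraph V} (hG : G.Connected) (x : V) :
    {y | G.dist x y = 0}.ncard = 1 := by
  rw [Set.ncard_eq_one]
  exact ⟨x, Set.ext fun y => (hG x y).dist_eq_zero_iff.trans eq_comm⟩

namespace IsDRGWith

variable [Finite V] {Γ : SimpleGraph V} {x y z : V}

theorem dist_ne_of_adj_of_gq44 (hd : Γ.IsDRGWith [5, 4, 4, 4] [1, 1, 1, 5]) (hyz : Γ.Adj y z) :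
    Γ.dist x y ≠ Γ.dist x z :=
  hd.dist_ne_of_adj (by decide) hyz

theorem ncard_dist_of_gq44 (hd : Γ.IsDRGWith [5, 4, 4, 4] [1, 1, 1, 5]) (x : V) :
    {y | Γ.dist x y = 2}.ncard = 20 ∧ {y | Γ.dist x y = 4}.ncard = 64 := by
  have := hd.1.ncard_dist_eq_zero x
  have := hd.ncard_dist_mul x 0
  have := hd.ncard_dist_mul x 1
  have := hd.ncard_dist_mul x 2
  have := hd.ncard_dist_mul x 3
  simp only [List.getD_cons_succ, List.getD_cons_zero, zero_add, Nat.reduceAdd] at *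
  omega

theorem ncard_even_dist_of_gq44 (hd : Γ.IsDRGWith [5, 4, 4, 4] [1, 1, 1, 5]) (x : V) :
    {y | Even (Γ.dist x y)}.ncard = 85 := by
  have hsplit : {y | Even (Γ.dist x y)} =
      ({y | Γ.dist x y = 0} ∪ {y | Γ.dist x y = 2}) ∪ {y | Γ.dist x y = 4} := by
    ext y
    have := hd.2.2.1 x y
    simp only [Set.mem_union, Set.mem_ofPred_eq, List.length_cons, List.length_nil] at this ⊢
    constructor
    · rintro ⟨k, hk⟩
      omega
    · rintro ((h | h) | h) <;> rw [h] <;> decide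
  rw [hsplit, Set.ncard_union_eq, Set.ncard_union_eq, hd.1.ncard_dist_eq_zero,
    (hd.ncard_dist_of_gq44 x).1, (hd.ncard_dist_of_gq44 x).2]
  all_goals
    refine Set.disjoint_left.mpr fun y h h' => ?_
    simp only [Set.mem_union, Set.mem_ofPred_eq] at h h'
    omega

theorem ncard_dist_two_dist_two_of_gq44 (hd : Γ.IsDRGWith [5, 4, 4, 4] [1, 1, 1, 5])
    (hxy : Γ.dist x y = 4) : {z | Γ.dist x z = 2 ∧ Γ.dist z y = 2}.ncard = 5 := by
  simpa using hd.ncard_dist_dist_two_mul (m := 2) hxy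

end IsDRGWith

end SimpleGraph

namespace cayleyGraph

open SimpleGraph

variable {G : Type*} [Group G] (S : Set G)

def mulRight (g : G) : cayleyGraph S ≃g cayleyGraph S where
  toEquiv := Equiv.mulRight g
  map_rel_iff' {a b} := by
    change (a * g ≠ b * g ∧ a * g * (b * g)⁻¹ ∈ S ∧ b * g * (a * g)⁻¹ ∈ S) ↔
      (a ≠ b ∧ a * b⁻¹ ∈ S ∧ b * a⁻¹ ∈ S)
    simp only [ne_eq, mul_left_inj, mul_inv_rev, mul_assoc, mul_inv_cancel_left]

theorem dist_mul_right (a b g : G) :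
    (cayleyGraph S).dist (a * g) (b * g) = (cayleyGraph S).dist a b :=
  (mulRight S g).dist_eq a b

theorem dist_one_inv (g : G) : (cayleyGraph S).dist 1 g⁻¹ = (cayleyGraph S).dist 1 g := by
  rw [SimpleGraph.dist_comm, ← dist_mul_right S g⁻¹ 1 g, inv_mul_cancel, one_mul]

def evenDistSubgroup (hconn : (cayleyGraph S).Connected)
    (hbip : ∀ x y z, (cayleyGraph S).Adj y z →
      (cayleyGraph S).dist x y ≠ (cayleyGraph S).dist x z) :
    Subgroup G where
  carrier := {g | Even ((cayleyGraph S).dist 1 g)}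
  one_mem' := by simp
  mul_mem' {a b} ha hb := by
    have hab : (cayleyGraph S).dist b (a * b) = (cayleyGraph S).dist 1 a := by
      simpa using dist_mul_right S 1 a b
    exact (hconn.even_dist_iff_of_forall_adj hbip 1 (a * b) b).mpr (iff_of_true hb (hab ▸ ha))
  inv_mem' {a} ha := by
    change Even _
    rwa [dist_one_inv]

theorem exists_mul_self_eq_of_odd_ncard {h : G} {i : ℕ}
    (hodd : Odd {d | (cayleyGraph S).dist 1 d = i ∧ (cayleyGraph S).dist d h = i}.ncard)
    (hcomm : ∀ d, (cayleyGraph S).dist 1 d = i → Commute d h) :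
    ∃ d, (cayleyGraph S).dist 1 d = i ∧ d * d = h := by
  set F := {d | (cayleyGraph S).dist 1 d = i ∧ (cayleyGraph S).dist d h = i}
  have hmaps : Set.MapsTo (fun d => d⁻¹ * h) F F := by
    rintro d ⟨hd1, hdh⟩
    refine ⟨?_, ?_⟩ <;> dsimp only
    · rw [(hcomm d hd1).inv_left.eq, ← dist_mul_right S _ _ d, one_mul, inv_mul_cancel_right]
      exact hdh
    · rw [← dist_mul_right S _ _ h⁻¹, mul_inv_cancel_right, mul_inv_cancel,
        SimpleGraph.dist_comm, dist_one_inv]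
      exact hd1
  have hinv : ∀ d ∈ F, (d⁻¹ * h)⁻¹ * h = d := by
    rintro d ⟨hd1, -⟩
    simp only [mul_inv_rev, inv_inv, mul_assoc, (hcomm d hd1).eq, inv_mul_cancel_left]
  obtain ⟨d, ⟨hd1, -⟩, hfix⟩ := Set.exists_fixed_of_involution_of_odd_ncard hmaps hinv hodd
  refine ⟨d, hd1, ?_⟩
  nth_rewrite 2 [← hfix]
  group

end cayleyGraph

theorem stmt_8_general {G : Type*} [Group G] [Fintype G] (S : Set G) :
    ¬ (cayleyGraph S).IsDRGWith [5, 4, 4, 4] [1, 1, 1, 5] := by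
  intro hd
  obtain ⟨hk2, hk4⟩ := hd.ncard_dist_of_gq44 1
  let H := cayleyGraph.evenDistSubgroup S hd.1 fun _ _ _ => hd.dist_ne_of_adj_of_gq44
  have hH : Nat.card H = 5 * 17 := (Nat.card_coe_set_eq _).trans (hd.ncard_even_dist_of_gq44 1)
  have : IsCyclic H :=
    isCyclic_of_card_eq_prime_mul_prime (by norm_num) (by norm_num) (by norm_num) (by decide)
      (by decide) hH
  have hsqrt : {g | (cayleyGraph S).dist 1 g = 4} ⊆
      (fun d => d * d) '' {d | (cayleyGraph S).dist 1 d = 2} := fun h h4 =>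
    cayleyGraph.exists_mul_self_eq_of_odd_ncard S
      (by rw [hd.ncard_dist_two_dist_two_of_gq44 h4]; decide)
      fun d hd2 => setLike_mul_comm (s := H) (by change Even _; rw [hd2]; decide)
        (by change Even _; rw [h4]; decide)
  have := (Set.ncard_le_ncard hsqrt).trans Set.ncard_image_le
  omega

/-- The incidence graph of the generalized quadrangle GQ(4,4), the unique
distance-regular graph with intersection array {5,4,4,4; 1,1,1,5}, is not a Cayley graph. -/
theorem stmt_8 {G : Type*} [Group G] [Fintype G] (S : Set G)
    (hS : ∀ s ∈ S, s⁻¹ ∈ S) (h1 : (1 : G) ∉ S) :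
    ¬ (cayleyGraph S).IsDRGWith [5, 4, 4, 4] [1, 1, 1, 5] :=
  stmt_8_general S
end
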